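/- Let A be a finite-dimensional complex vector space carrying a unital associative ℂ-algebra structure and a coassociative counital ℂ-coalgebra structure, let Ω ∈ A be cocentral and non-degenerate, and let T : A → A be a linear map satisfying the pulling-through equation (1⊗x)·Δ(Ω) = (T(x)⊗1)·Δ(Ω) for all x ∈ A. Then T is an anti-homomorphism: T(x·y) = T(y)·T(x) for all x, y ∈ A; moreover T is bijective. -/
import Mathlib


/-!
STATEMENT 8: Let `A` be a finite-dimensional complex vector space carrying a unital
associative `ℂ`-algebra structure and a coassociative counital `ℂ`-coalgebra structure,
let `Ω ∈ A` be cocentral and non-degenerate, and let `T : A → A` be a linear map satisfying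
the pulling-through equation `(1 ⊗ x) * Δ Ω = (T x ⊗ 1) * Δ Ω` for all `x`.  Then `T` is an
anti-homomorphism, `T (x * y) = T y * T x`, and `T` is bijective.
-/

open TensorProduct

noncomputable section

/-- `Ω` is non-degenerate:
`{(id ⊗ f) (Δ Ω) : f ∈ A*} = A` and `{(f ⊗ id) (Δ Ω) : f ∈ A*} = A`. -/
def IsNonDegenerate {A : Type*} [Ring A] [Algebra ℂ A] [Coalgebra ℂ A] (Ω : A) : Prop :=
  (∀ y : A, ∃ f : Module.Dual ℂ A,
      (TensorProduct.rid ℂ A) (LinearMap.lTensor A f (Coalgebra.comul Ω)) = y) ∧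
  (∀ y : A, ∃ f : Module.Dual ℂ A,
      (TensorProduct.lid ℂ A) (LinearMap.rTensor A f (Coalgebra.comul Ω)) = y)

theorem pulling_through_antihom_bijective
    {A : Type*} [Ring A] [Algebra ℂ A] [FiniteDimensional ℂ A] [Coalgebra ℂ A]
    (Ω : A)
    -- `Ω` is cocentral:
    (hcoc : (TensorProduct.comm ℂ A A) (Coalgebra.comul Ω) = Coalgebra.comul Ω)
    (hΩ : IsNonDegenerate Ω) (T : A →ₗ[ℂ] A)
    -- the pulling-through equation:
    (hT : ∀ x : A,
      ((1 : A) ⊗ₜ[ℂ] x) * Coalgebra.comul Ω = (T x ⊗ₜ[ℂ] (1 : A)) * Coalgebra.comul Ω) :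
    (∀ x y : A, T (x * y) = T y * T x) ∧ Function.Bijective T := by
  set D := Coalgebra.comul (R := ℂ) Ω with hD
  -- from the first non-degeneracy condition: (a ⊗ 1) * D = 0 → a = 0
  obtain ⟨f, hf⟩ := hΩ.1 1
  set φ : A ⊗[ℂ] A →ₗ[ℂ] A :=
    (TensorProduct.rid ℂ A).toLinearMap ∘ₗ LinearMap.lTensor A f with hφdef
  have hφD : φ D = 1 := hf
  have hφmul : ∀ (a : A) (z : A ⊗[ℂ] A), φ ((a ⊗ₜ[ℂ] (1 : A)) * z) = a * φ z := by
    intro a z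
    induction z using TensorProduct.induction_on with
    | zero => simp
    | tmul c d =>
        simp [hφdef, Algebra.TensorProduct.tmul_mul_tmul, LinearMap.lTensor_tmul,
          TensorProduct.rid_tmul, Algebra.mul_smul_comm]
    | add u v hu hv => simp [mul_add, add_mul, hu, hv]
  have hleft : ∀ a : A, (a ⊗ₜ[ℂ] (1 : A)) * D = 0 → a = 0 := by
    intro a ha
    have := hφmul a D
    rw [ha, hφD, mul_one] at this
    simpa using this.symm
  -- from the second non-degeneracy condition: (1 ⊗ x) * D = 0 → x = 0
  obtain ⟨g, hg⟩ := hΩ.2 1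
  set ψ : A ⊗[ℂ] A →ₗ[ℂ] A :=
    (TensorProduct.lid ℂ A).toLinearMap ∘ₗ LinearMap.rTensor A g with hψdef
  have hψD : ψ D = 1 := hg
  have hψmul : ∀ (x : A) (z : A ⊗[ℂ] A), ψ (((1 : A) ⊗ₜ[ℂ] x) * z) = x * ψ z := by
    intro x z
    induction z using TensorProduct.induction_on with
    | zero => simp
    | tmul c d =>
        simp [hψdef, Algebra.TensorProduct.tmul_mul_tmul, LinearMap.rTensor_tmul,
          TensorProduct.lid_tmul, Algebra.mul_smul_comm]
    | add u v hu hv => simp [mul_add, add_mul, hu, hv]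
  have hright : ∀ x : A, ((1 : A) ⊗ₜ[ℂ] x) * D = 0 → x = 0 := by
    intro x hx
    have := hψmul x D
    rw [hx, hψD, mul_one] at this
    simpa using this.symm
  constructor
  · intro x y
    have key : (T (x * y) ⊗ₜ[ℂ] (1 : A)) * D = ((T y * T x) ⊗ₜ[ℂ] (1 : A)) * D := by
      calc (T (x * y) ⊗ₜ[ℂ] (1 : A)) * D
          = ((1 : A) ⊗ₜ[ℂ] (x * y)) * D := (hT (x * y)).symm
        _ = ((1 : A) ⊗ₜ[ℂ] x) * (((1 : A) ⊗ₜ[ℂ] y) * D) := by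
            rw [← mul_assoc, Algebra.TensorProduct.tmul_mul_tmul, one_mul]
        _ = ((1 : A) ⊗ₜ[ℂ] x) * ((T y ⊗ₜ[ℂ] (1 : A)) * D) := by rw [hT y]
        _ = (T y ⊗ₜ[ℂ] (1 : A)) * (((1 : A) ⊗ₜ[ℂ] x) * D) := by
            rw [← mul_assoc, ← mul_assoc, Algebra.TensorProduct.tmul_mul_tmul,
              Algebra.TensorProduct.tmul_mul_tmul, one_mul, one_mul, mul_one, mul_one]
        _ = (T y ⊗ₜ[ℂ] (1 : A)) * ((T x ⊗ₜ[ℂ] (1 : A)) * D) := by rw [hT x]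
        _ = ((T y * T x) ⊗ₜ[ℂ] (1 : A)) * D := by
            rw [← mul_assoc, Algebra.TensorProduct.tmul_mul_tmul, mul_one]
    have : ((T (x * y) - T y * T x) ⊗ₜ[ℂ] (1 : A)) * D = 0 := by
      rw [TensorProduct.sub_tmul, sub_mul, key, sub_self]
    have := hleft _ this
    exact sub_eq_zero.mp this
  · have hinj : Function.Injective T := by
      rw [← LinearMap.ker_eq_bot, LinearMap.ker_eq_bot']
      intro x hx
      apply hright
      rw [hT x, hx, TensorProduct.zero_tmul, zero_mul]
    exact ⟨hinj, LinearMap.injective_iff_surjective.mp hinj⟩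

end
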